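/- arXiv:2403.13116 — 2 statements merged into one kernel-verified Lean document; each statement's English description precedes it below -/
import Mathlib

section
/- Let λ_min = 3.87, A₀ = (1 − 1/λ_min, 3/4), L₁ = 1/λ_min − 1/4, L₂ = 4 − λ_min. For every x ∈ A₀ and every measurable set A ⊆ A₀, the Lebesgue measure of the set {λ ∈ (λ_min, 4) : λ·x·(1−x) ∈ A} divided by L₂ is at least (1/λ_min) times the Lebesgue measure of A divided by L₁. In other words, the one-step transition probability p(x,A) = (1/L₂)·Leb({λ ∈ (λ_min,4) : f_λ(x) ∈ A}) satisfies p(x,A) ≥ (1/λ_min)·φ(A), where φ is normalized Lebesgue measure on A₀. -/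
/-!
Write `c = x (1 - x)`, so that `f_λ(x) = λ c`. For `x ∈ A₀` we have `3/16 < c ≤ 1/4`, and since
`x` lies to the right of the fixed point `1 - 1/λ_min`, also `λ_min c < 1 - 1/λ_min`. Hence
`λ ↦ λ c` maps `(λ_min, 4)` onto an interval containing `A₀`, and the set of admissible `λ` is the
full preimage of `A` under this dilation, of measure `Leb(A) / c ≥ 4 Leb(A)`. The constant works
out exactly: `4 / L₂ = (1/λ_min) / L₁`.
-/

open Set MeasureTheory

theorem mul_one_sub_le_one_div_four (x : ℝ) : x * (1 - x) ≤ 1 / 4 := by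
  nlinarith [sq_nonneg (x - 1 / 2)]

theorem three_div_sixteen_lt_mul_one_sub {x : ℝ} (h₁ : 1 / 4 < x) (h₂ : x < 3 / 4) :
    3 / 16 < x * (1 - x) := by
  nlinarith

theorem mul_mul_one_sub_lt_one_sub_one_div {r x : ℝ} (hr : 2 ≤ r) (hx : 1 - 1 / r < x) :
    r * (x * (1 - x)) < 1 - 1 / r := by
  set p := 1 - 1 / r
  have hp : 1 / 2 ≤ p := by
    have : 1 / r ≤ 1 / 2 := one_div_le_one_div_of_le (by norm_num) hr
    linarith
  -- `x (1 - x) - p (1 - p) = (x - p) (1 - x - p)`, a product of a positive and a negative factor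
  have hlt : x * (1 - x) < p * (1 - p) := by nlinarith
  calc r * (x * (1 - x)) < r * (p * (1 - p)) := by gcongr
    _ = p := by simp only [p]; field_simp; ring

theorem setOf_mem_Ioo_and_mul_mem_eq_preimage {a b c : ℝ} (hc : 0 < c) {A : Set ℝ}
    (hA : A ⊆ Ioo (a * c) (b * c)) :
    {l : ℝ | l ∈ Ioo a b ∧ l * c ∈ A} = (· * c) ⁻¹' A := by
  ext l
  refine ⟨fun h ↦ h.2, fun h ↦ ⟨?_, h⟩⟩
  obtain ⟨ha, hb⟩ := hA h
  exact ⟨lt_of_mul_lt_mul_right ha hc.le, lt_of_mul_lt_mul_right hb hc.le⟩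

theorem volume_setOf_mem_Ioo_and_mul_mem {a b c : ℝ} (hc : 0 < c) {A : Set ℝ}
    (hA : A ⊆ Ioo (a * c) (b * c)) :
    volume {l : ℝ | l ∈ Ioo a b ∧ l * c ∈ A} = ENNReal.ofReal c⁻¹ * volume A := by
  rw [setOf_mem_Ioo_and_mul_mem_eq_preimage hc hA, Real.volume_preimage_mul_right hc.ne',
    abs_of_pos (inv_pos.mpr hc)]

theorem minorization_lemma_general
    (x : ℝ) (hx : x ∈ Ioo (1 - 1/(3.87:ℝ)) (3/4))
    (A : Set ℝ) (hAsub : A ⊆ Ioo (1 - 1/(3.87:ℝ)) (3/4)) :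
    (volume {l : ℝ | l ∈ Ioo (3.87:ℝ) 4 ∧ l * x * (1 - x) ∈ A}).toReal / (4 - 3.87)
      ≥ (1/3.87) * ((volume A).toReal / (1/3.87 - 1/4)) := by
  obtain ⟨hx_lo, hx_hi⟩ := hx
  set c := x * (1 - x) with hc
  have hc_lo : 3 / 16 < c := three_div_sixteen_lt_mul_one_sub (by norm_num at hx_lo ⊢; linarith) hx_hi
  have hc_inv : 4 ≤ c⁻¹ := by
    rw [le_inv_comm₀ (by norm_num) (by linarith)]
    simpa using mul_one_sub_le_one_div_four x
  have hA_range : A ⊆ Ioo (3.87 * c) (4 * c) :=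
    hAsub.trans (Ioo_subset_Ioo (mul_mul_one_sub_lt_one_sub_one_div (by norm_num) hx_lo).le
      (by linarith))
  simp only [mul_assoc, ← hc]
  rw [volume_setOf_mem_Ioo_and_mul_mem (by linarith) hA_range, ENNReal.toReal_mul,
    ENNReal.toReal_ofReal (by linarith)]
  have hA_nonneg : 0 ≤ (volume A).toReal := ENNReal.toReal_nonneg
  calc (1 / 3.87) * ((volume A).toReal / (1 / 3.87 - 1 / 4))
      = 4 * (volume A).toReal / (4 - 3.87) := by field_simp
    _ ≤ c⁻¹ * (volume A).toReal / (4 - 3.87) := by gcongr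

theorem minorization_lemma
    (x : ℝ) (hx : x ∈ Ioo (1 - 1/(3.87:ℝ)) (3/4))
    (A : Set ℝ) (hA : MeasurableSet A) (hAsub : A ⊆ Ioo (1 - 1/(3.87:ℝ)) (3/4)) :
    (volume {l : ℝ | l ∈ Ioo (3.87:ℝ) 4 ∧ l * x * (1 - x) ∈ A}).toReal / (4 - 3.87)
      ≥ (1/3.87) * ((volume A).toReal / (1/3.87 - 1/4)) :=
  minorization_lemma_general x hx A hAsub
end

section
/- The probability measure on (0,1) with density f*(x) = 1/(π·√(x(1−x))) (the Beta(1/2,1/2) distribution) is invariant under the logistic map f₄(x) = 4x(1−x): if X has density f*, then 4X(1−X) also has density f*. Equivalently, for every measurable A ⊆ (0,1), ∫_{f₄⁻¹(A)} f*(x) dx = ∫_A f*(x) dx. -/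
open Set MeasureTheory Real

/-!
Away from `x = 1/2` the logistic map `T x = 4x(1-x)` is two-to-one from `(0,1)` onto `(0,1)`,
with inverse branches `x = (1 ± √(1-y))/2`. On each branch `x(1-x) = y/4` and
`|dx/dy| = 1/(4√(1-y))`, so the arcsine density `f*` pulls back to exactly `f*(y)/2`:
each branch carries half of the mass of `A`, and the change of variables formula on the two
branches gives the invariance. Working with the `ℝ≥0∞`-valued integral of the nonnegative
density frees the argument from integrability side conditions.
-/

noncomputable section

def logistic (x : ℝ) : ℝ := 4 * x * (1 - x)

/-- The inverse branch of `logistic` with values on the side `0 < s * (2x - 1)`, for `s = ±1`. -/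
def logisticBranch (s y : ℝ) : ℝ := (1 + s * √(1 - y)) / 2

def arcsineDensity (x : ℝ) : ℝ := 1 / (π * √(x * (1 - x)))

end

lemma one_sub_logistic (x : ℝ) : 1 - logistic x = (2 * x - 1) ^ 2 := by
  unfold logistic; ring

lemma mem_Ioo_of_logistic_pos {x : ℝ} (hx : 0 < logistic x) : x ∈ Ioo 0 1 := by
  unfold logistic at hx
  constructor <;> nlinarith

lemma abs_eq_one_of_sq_eq_one {s : ℝ} (hs : s ^ 2 = 1) : |s| = 1 :=
  (pow_eq_one_iff_of_nonneg (abs_nonneg s) two_ne_zero).1 (by rwa [sq_abs])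

lemma arcsineDensity_nonneg (x : ℝ) : 0 ≤ arcsineDensity x := by
  unfold arcsineDensity; positivity

lemma measurable_arcsineDensity : Measurable arcsineDensity := by
  unfold arcsineDensity; fun_prop

lemma setIntegral_arcsineDensity_eq_toReal_lintegral (s : Set ℝ) :
    ∫ x in s, arcsineDensity x = (∫⁻ x in s, ENNReal.ofReal (arcsineDensity x)).toReal :=
  integral_eq_lintegral_of_nonneg_ae (.of_forall arcsineDensity_nonneg)
    measurable_arcsineDensity.aestronglyMeasurable

section Branch

variable {s y : ℝ}

lemma logisticBranch_mul_one_sub (hs : s ^ 2 = 1) (hy : y ≤ 1) :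
    logisticBranch s y * (1 - logisticBranch s y) = y / 4 := by
  have hsqrt : √(1 - y) ^ 2 = 1 - y := sq_sqrt (by linarith)
  unfold logisticBranch
  linear_combination (-1 / 4 : ℝ) * s ^ 2 * hsqrt + (y - 1) / 4 * hs

lemma logistic_logisticBranch (hs : s ^ 2 = 1) (hy : y ≤ 1) :
    logistic (logisticBranch s y) = y := by
  have h := logisticBranch_mul_one_sub hs hy
  unfold logistic
  linear_combination 4 * h

lemma logisticBranch_logistic (hs : s ^ 2 = 1) {x : ℝ} (hx : 0 < s * (2 * x - 1)) :
    logisticBranch s (logistic x) = x := by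
  have habs : |2 * x - 1| = s * (2 * x - 1) := by
    rw [← abs_of_pos hx, abs_mul, abs_eq_one_of_sq_eq_one hs, one_mul]
  unfold logisticBranch
  rw [one_sub_logistic, sqrt_sq_eq_abs, habs]
  linear_combination (2 * x - 1) / 2 * hs

lemma image_logisticBranch (hs : s ^ 2 = 1) {A : Set ℝ} (hA : A ⊆ Iio 1) :
    logisticBranch s '' A = logistic ⁻¹' A ∩ {x | 0 < s * (2 * x - 1)} := by
  ext x
  constructor
  · rintro ⟨y, hyA, rfl⟩
    have hy : y < 1 := hA hyA
    refine ⟨by rwa [mem_preimage, logistic_logisticBranch hs hy.le], ?_⟩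
    show 0 < s * (2 * ((1 + s * √(1 - y)) / 2) - 1)
    rw [show s * (2 * ((1 + s * √(1 - y)) / 2) - 1) = √(1 - y) by
      linear_combination √(1 - y) * hs]
    exact sqrt_pos.2 (by linarith)
  · rintro ⟨hxA, hx⟩
    exact ⟨logistic x, hxA, logisticBranch_logistic hs hx⟩

lemma hasDerivAt_logisticBranch (hy : y < 1) :
    HasDerivAt (logisticBranch s) (-s / (4 * √(1 - y))) y := by
  have hsqrt : HasDerivAt (fun y => √(1 - y)) (-1 / (2 * √(1 - y))) y := by
    simpa using ((hasDerivAt_id y).const_sub 1).sqrt (by simp; linarith)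
  exact (((hsqrt.const_mul s).const_add 1).div_const 2).congr_deriv (by ring)

lemma abs_deriv_mul_arcsineDensity_logisticBranch (hs : s ^ 2 = 1) (hy : y < 1) :
    |-s / (4 * √(1 - y))| * arcsineDensity (logisticBranch s y) = arcsineDensity y / 2 := by
  have hprod := logisticBranch_mul_one_sub hs hy.le
  unfold arcsineDensity
  rw [hprod, sqrt_div' _ (by norm_num : (0 : ℝ) ≤ 4), sqrt_mul' _ (by linarith : 0 ≤ 1 - y),
    show √(4 : ℝ) = 2 by rw [show (4 : ℝ) = 2 ^ 2 by norm_num, sqrt_sq zero_le_two],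
    abs_div, abs_neg, abs_eq_one_of_sq_eq_one hs, abs_of_nonneg (by positivity)]
  simp only [div_eq_mul_inv, mul_inv, inv_inv]
  ring

lemma setLIntegral_image_logisticBranch (hs : s ^ 2 = 1) {A : Set ℝ}
    (hAm : MeasurableSet A) (hA : A ⊆ Iio 1) :
    ∫⁻ x in logisticBranch s '' A, ENNReal.ofReal (arcsineDensity x)
      = (∫⁻ y in A, ENNReal.ofReal (arcsineDensity y)) / 2 := by
  have hinv : LeftInvOn logistic (logisticBranch s) A :=
    fun y hy => logistic_logisticBranch hs (hA hy).le
  rw [lintegral_image_eq_lintegral_abs_deriv_mul hAm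
      (fun y hy => (hasDerivAt_logisticBranch (hA hy)).hasDerivWithinAt) hinv.injOn,
    div_eq_mul_inv, ← lintegral_mul_const' _ _ (by simp)]
  refine setLIntegral_congr_fun hAm fun y hy => ?_
  rw [← ENNReal.ofReal_mul (abs_nonneg _),
    abs_deriv_mul_arcsineDensity_logisticBranch hs (hA hy), ENNReal.ofReal_div_of_pos two_pos,
    ENNReal.ofReal_ofNat, div_eq_mul_inv]

end Branch

lemma setLIntegral_preimage_logistic {A : Set ℝ} (hAm : MeasurableSet A) (hA : A ⊆ Ioo 0 1) :
    ∫⁻ x in logistic ⁻¹' A, ENNReal.ofReal (arcsineDensity x)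
      = ∫⁻ x in A, ENNReal.ofReal (arcsineDensity x) := by
  have hA1 : A ⊆ Iio 1 := fun y hy => (hA hy).2
  have hsplit : logistic ⁻¹' A = logisticBranch 1 '' A ∪ logisticBranch (-1) '' A := by
    rw [image_logisticBranch (one_pow 2) hA1, image_logisticBranch (by norm_num) hA1,
      ← inter_union_distrib_left, eq_comm, inter_eq_left]
    intro x hx
    have hx2 : x ≠ 1 / 2 := by
      rintro rfl
      exact (hA hx).2.ne (by norm_num [logistic])
    rcases hx2.lt_or_gt with h | h
    · right; show 0 < -1 * (2 * x - 1); linarith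
    · left; show 0 < 1 * (2 * x - 1); linarith
  have hdisj : Disjoint (logisticBranch 1 '' A) (logisticBranch (-1) '' A) := by
    rw [image_logisticBranch (one_pow 2) hA1, image_logisticBranch (by norm_num) hA1]
    exact Set.disjoint_left.2 fun x h₁ h₂ => by linarith [h₁.2.out, h₂.2.out]
  have hmeas : MeasurableSet (logisticBranch (-1) '' A) := by
    rw [image_logisticBranch (by norm_num) hA1]
    exact (measurableSet_preimage (by unfold logistic; fun_prop) hAm).inter
      (measurableSet_lt measurable_const (by fun_prop))
  rw [hsplit, lintegral_union hmeas hdisj, setLIntegral_image_logisticBranch (one_pow 2) hAm hA1,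
    setLIntegral_image_logisticBranch (by norm_num) hAm hA1, ENNReal.add_halves]

theorem beta_invariant_under_logistic
    (A : Set ℝ) (hA : MeasurableSet A) (hAsub : A ⊆ Ioo (0:ℝ) 1) :
    ∫ x in ((fun x : ℝ => 4 * x * (1 - x)) ⁻¹' A ∩ Ioo (0:ℝ) 1),
        1 / (π * Real.sqrt (x * (1 - x)))
      = ∫ x in A, 1 / (π * Real.sqrt (x * (1 - x))) := by
  have hsub : logistic ⁻¹' A ⊆ Ioo 0 1 := fun x hx => mem_Ioo_of_logistic_pos (hAsub hx).1
  change ∫ x in logistic ⁻¹' A ∩ Ioo 0 1, arcsineDensity x = ∫ x in A, arcsineDensity x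
  rw [inter_eq_left.2 hsub, setIntegral_arcsineDensity_eq_toReal_lintegral,
    setIntegral_arcsineDensity_eq_toReal_lintegral, setLIntegral_preimage_logistic hA hAsub]
end
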